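/- arXiv:1403.6602 — 2 statements merged into one kernel-verified Lean document; each statement's English description precedes it below -/
import Mathlib

section
/- Let t = (t₁,t₂,t₃) ∈ ℕ³, k = t₁+t₂+t₃+2, and let w ≥ k be an integer. Define the exact comparison toll e_n = (n−k)·(1 + (t₂+1)/(k+1)) + ((2t₁+t₂+3)(t₃+1)/((k+1)(k+2)))·(n−k−1) + 3(t₃+1)/(k+1) for n > w. Then any sequence (C_n) with arbitrary fixed values for n ≤ w and C_n = e_n + Σ_{j=0}^{n−2} w_{n,j}·C_j for n > w satisfies C_n / (n·ln n) → a_C / H(t) as n → ∞, where a_C = 1 + (t₂+1)/(k+1) + (2t₁+t₂+3)(t₃+1)/((k+1)(k+2)). -/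
/-!
The weights are the laws of the three subproblem sizes under pivot sampling: shifted by `t_l`,
the `l`-th one is the beta-binomial law of a Pólya urn started with `t_l + 1` and `k - t_l` balls
after `n - k` draws. One draw of the urn gives closed forms for its mass, its mean and its
harmonic moment `E[(a + i) H_{a + i}]`, whence `∑ w_{n,j} = 3`, `∑ w_{n,j} (j + 1) = n + 1` and
`∑ w_{n,j} (j + 1) H_{j + 1} = (n + 1) (H_{n + 1} - H(t))`. The toll is affine, `a_C (n + 1) + β`,
so `α (n + 1) H_{n + 1} + γ` with `α = a_C / H(t)` and `γ = -β / 2` solves the recurrence exactly.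
The difference from `C` solves the homogeneous recurrence, and the mean identity bounds it by
`c (n + 1) = o(n log n)`, while `(n + 1) H_{n + 1} ~ n log n`.
-/

open Finset Filter Real Asymptotics

/-- The `n`-th harmonic number `H_n = ∑_{i=1}^n 1/i`. -/
noncomputable def harm (n : ℕ) : ℝ := ∑ i ∈ Finset.range n, (1 : ℝ) / (i + 1)

/-- The discrete entropy `H(t)` of `t = (t₁,t₂,t₃)` with `k = t₁+t₂+t₃+2`. -/
noncomputable def Hdisc (t1 t2 t3 : ℕ) : ℝ :=
  ((t1 : ℝ) + 1) / ((t1 : ℝ) + t2 + t3 + 3) * (harm (t1 + t2 + t3 + 3) - harm (t1 + 1))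
  + ((t2 : ℝ) + 1) / ((t1 : ℝ) + t2 + t3 + 3) * (harm (t1 + t2 + t3 + 3) - harm (t2 + 1))
  + ((t3 : ℝ) + 1) / ((t1 : ℝ) + t2 + t3 + 3) * (harm (t1 + t2 + t3 + 3) - harm (t3 + 1))

/-- Rising factorial `a^{(m)} = a (a+1) ⋯ (a+m−1)`. -/
def ascNat (a m : ℕ) : ℕ := ∏ i ∈ Finset.range m, (a + i)

/-- `π_l(N, i) = binom(N,i) (t+1)^{(i)} (k−t)^{(N−i)} / (k+1)^{(N)}` for `0 ≤ i ≤ N`, else `0`. -/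
noncomputable def piw (t k N : ℕ) (i : ℤ) : ℝ :=
  if 0 ≤ i ∧ i ≤ (N : ℤ) then
    (N.choose i.toNat : ℝ) * (ascNat (t + 1) i.toNat : ℝ)
      * (ascNat (k - t) (N - i.toNat) : ℝ) / (ascNat (k + 1) N : ℝ)
  else 0

/-- The recurrence weights `w_{n,j} = ∑_{l=1}^3 π_l(n−k, j−t_l)`. -/
noncomputable def wgt (t1 t2 t3 n j : ℕ) : ℝ :=
  piw t1 (t1 + t2 + t3 + 2) (n - (t1 + t2 + t3 + 2)) ((j : ℤ) - t1)
  + piw t2 (t1 + t2 + t3 + 2) (n - (t1 + t2 + t3 + 2)) ((j : ℤ) - t2)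
  + piw t3 (t1 + t2 + t3 + 2) (n - (t1 + t2 + t3 + 2)) ((j : ℤ) - t3)

open Topology

lemma harm_succ (n : ℕ) : harm (n + 1) = harm n + 1 / ((n : ℝ) + 1) := by
  simp [harm, Finset.sum_range_succ]

lemma harm_eq_harmonic (n : ℕ) : harm n = harmonic n := by
  simp [harm, harmonic, one_div]

lemma harm_strictMono : StrictMono harm :=
  strictMono_nat_of_lt_succ fun n => by
    rw [harm_succ]
    exact lt_add_of_pos_right _ (by positivity)

lemma Hdisc_pos (t1 t2 t3 : ℕ) : 0 < Hdisc t1 t2 t3 := by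
  have h1 : 0 < harm (t1 + t2 + t3 + 3) - harm (t1 + 1) := sub_pos.2 (harm_strictMono (by omega))
  have h2 : 0 < harm (t1 + t2 + t3 + 3) - harm (t2 + 1) := sub_pos.2 (harm_strictMono (by omega))
  have h3 : 0 < harm (t1 + t2 + t3 + 3) - harm (t3 + 1) := sub_pos.2 (harm_strictMono (by omega))
  rw [Hdisc]
  positivity

lemma ascNat_eq_ascFactorial (a m : ℕ) : ascNat a m = a.ascFactorial m :=
  (Nat.ascFactorial_eq_prod_range a m).symm

lemma natCast_ascFactorial_ne_zero {m : ℕ} (hm : 0 < m) (N : ℕ) : (m.ascFactorial N : ℝ) ≠ 0 := by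
  have := Nat.ascFactorial_pos (m - 1) N
  rw [Nat.sub_add_cancel hm] at this
  exact_mod_cast this.ne'

/-- The probability of drawing `i` balls of the first colour in `N` draws from a Pólya urn that
starts with `a` balls of the first and `b` of the second colour. -/
noncomputable def betaBinomial (a b N i : ℕ) : ℝ :=
  N.choose i * a.ascFactorial i * b.ascFactorial (N - i) / (a + b).ascFactorial N

namespace betaBinomial

variable {a b : ℕ}

lemma eq_zero_of_lt {N i : ℕ} (h : N < i) : betaBinomial a b N i = 0 := by
  simp [betaBinomial, Nat.choose_eq_zero_of_lt h]

lemma zero_zero : betaBinomial a b 0 0 = 1 := by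
  simp [betaBinomial]

section

variable (hab : 0 < a + b)
include hab

lemma succ_zero (N : ℕ) :
    betaBinomial a b (N + 1) 0 * (a + b + N) = betaBinomial a b N 0 * (b + N) := by
  have hden := natCast_ascFactorial_ne_zero hab N
  have hN : (a + b + N : ℝ) ≠ 0 := by norm_cast; omega
  simp only [betaBinomial, Nat.choose_zero_right, Nat.sub_zero, Nat.ascFactorial_succ]
  push_cast
  field_simp

lemma succ_succ (N i : ℕ) :
    betaBinomial a b (N + 1) (i + 1) * (a + b + N)
      = betaBinomial a b N (i + 1) * (b + N - (i + 1)) + betaBinomial a b N i * (a + i) := by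
  have hden := natCast_ascFactorial_ne_zero hab N
  have hN : (a + b + N : ℝ) ≠ 0 := by norm_cast; omega
  rcases lt_trichotomy i N with h | rfl | h
  · obtain ⟨m, rfl⟩ := Nat.exists_eq_add_of_lt h
    simp only [betaBinomial, Nat.choose_succ_succ', show i + m + 1 + 1 - (i + 1) = m + 1 by omega,
      show i + m + 1 - (i + 1) = m by omega, show i + m + 1 - i = m + 1 by omega,
      Nat.ascFactorial_succ]
    push_cast
    field_simp
    ring
  · simp only [betaBinomial, Nat.choose_self, Nat.choose_succ_self, Nat.sub_self,
      Nat.ascFactorial_succ, Nat.ascFactorial_zero]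
    push_cast
    field_simp
    ring
  · rw [eq_zero_of_lt (by omega : N + 1 < i + 1), eq_zero_of_lt (by omega : N < i + 1),
      eq_zero_of_lt h]
    ring

lemma mul_sum_range_succ (N : ℕ) (ψ : ℕ → ℝ) :
    (a + b + N) * ∑ i ∈ range (N + 2), betaBinomial a b (N + 1) i * ψ i
      = ∑ i ∈ range (N + 1),
          betaBinomial a b N i * ((b + N - i) * ψ i + (a + i) * ψ (i + 1)) := by
  have hshift : ∑ i ∈ range (N + 1), betaBinomial a b N i * ((b + N - i) * ψ i)
      = ∑ i ∈ range (N + 1), betaBinomial a b N (i + 1) * ((b + N - (i + 1 : ℕ)) * ψ (i + 1))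
        + betaBinomial a b N 0 * ((b + N) * ψ 0) := by
    have h := Finset.sum_range_succ' (fun i => betaBinomial a b N i * ((b + N - i) * ψ i)) (N + 1)
    rw [Finset.sum_range_succ, eq_zero_of_lt (Nat.lt_succ_self N), zero_mul, add_zero] at h
    simpa using h
  calc (a + b + N) * ∑ i ∈ range (N + 2), betaBinomial a b (N + 1) i * ψ i
      = ∑ i ∈ range (N + 1), betaBinomial a b (N + 1) (i + 1) * (a + b + N) * ψ (i + 1)
        + betaBinomial a b (N + 1) 0 * (a + b + N) * ψ 0 := by
        rw [Finset.mul_sum, Finset.sum_range_succ']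
        congr 1
        · exact Finset.sum_congr rfl fun i _ => by ring
        · ring
    _ = ∑ i ∈ range (N + 1), (betaBinomial a b N (i + 1) * (b + N - (i + 1))
          + betaBinomial a b N i * (a + i)) * ψ (i + 1)
        + betaBinomial a b N 0 * (b + N) * ψ 0 := by
        simp only [succ_succ hab, succ_zero hab]
    _ = _ := by
        simp only [mul_add, Finset.sum_add_distrib, hshift]
        rw [add_right_comm, ← Finset.sum_add_distrib]
        congr 1
        · exact Finset.sum_congr rfl fun i _ => by push_cast; ring
        · ring

lemma sum_range (N : ℕ) : ∑ i ∈ range (N + 1), betaBinomial a b N i = 1 := by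
  induction N with
  | zero => simp [zero_zero]
  | succ N ih =>
    have h := mul_sum_range_succ hab N fun _ => 1
    have : (a + b + N : ℝ) ≠ 0 := by norm_cast; omega
    simp only [mul_one] at h
    rw [Finset.sum_congr rfl fun i _ => show betaBinomial a b N i * (b + N - i + (a + i))
      = (a + b + N) * betaBinomial a b N i by ring, ← Finset.mul_sum, ih] at h
    simpa [this] using h

lemma sum_range_mul_natCast (N : ℕ) :
    ∑ i ∈ range (N + 1), betaBinomial a b N i * (a + i : ℕ) = a * (a + b + N) / (a + b) := by
  have hab' : (a + b : ℝ) ≠ 0 := by norm_cast; omega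
  induction N with
  | zero => simp [zero_zero, mul_div_cancel_right₀ _ hab']
  | succ N ih =>
    have h := mul_sum_range_succ hab N fun i => (a + i : ℕ)
    have : (a + b + N : ℝ) ≠ 0 := by norm_cast; omega
    rw [Finset.sum_congr rfl fun i _ => show betaBinomial a b N i * ((b + N - i) * (a + i : ℕ)
      + (a + i) * (a + (i + 1) : ℕ)) = (a + b + N + 1) * (betaBinomial a b N i * (a + i : ℕ)) by
        push_cast; ring, ← Finset.mul_sum, ih] at h
    apply mul_left_cancel₀ this
    rw [h]
    push_cast
    field_simp
    ring

lemma sum_range_mul_harm (N : ℕ) :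
    ∑ i ∈ range (N + 1), betaBinomial a b N i * ((a + i : ℕ) * harm (a + i))
      = a * (a + b + N) / (a + b) * (harm a + harm (a + b + N) - harm (a + b)) := by
  have hab' : (a + b : ℝ) ≠ 0 := by norm_cast; omega
  induction N with
  | zero => simp [zero_zero, mul_div_cancel_right₀ _ hab']
  | succ N ih =>
    have h := mul_sum_range_succ hab N fun i => (a + i : ℕ) * harm (a + i)
    have hN : (a + b + N : ℝ) ≠ 0 := by norm_cast; omega
    have : (a + b + N + 1 : ℝ) ≠ 0 := by positivity
    rw [Finset.sum_congr rfl fun i _ => show betaBinomial a b N i * ((b + N - i) * ((a + i : ℕ) *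
      harm (a + i)) + (a + i) * ((a + (i + 1) : ℕ) * harm (a + (i + 1))))
        = (a + b + N + 1) * (betaBinomial a b N i * ((a + i : ℕ) * harm (a + i)))
          + betaBinomial a b N i * (a + i : ℕ) by
        rw [← add_assoc, harm_succ]
        have : (a + i + 1 : ℝ) ≠ 0 := by positivity
        push_cast
        field_simp
        ring,
      Finset.sum_add_distrib, ← Finset.mul_sum, ih, sum_range_mul_natCast hab] at h
    apply mul_left_cancel₀ hN
    rw [h, ← add_assoc, harm_succ]
    push_cast
    field_simp
    ring

end

variable {t k n : ℕ} (htk : t ≤ k) (hkn : k ≤ n)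
include htk hkn

lemma sum_range_mul_natCast_of_le :
    ∑ i ∈ range (n - k + 1), betaBinomial (t + 1) (k - t) (n - k) i * (t + 1 + i : ℕ)
      = (t + 1) * (n + 1) / (k + 1) := by
  rw [sum_range_mul_natCast (by omega)]
  push_cast [Nat.cast_sub htk, Nat.cast_sub hkn]
  ring_nf

lemma sum_range_mul_harm_of_le :
    ∑ i ∈ range (n - k + 1),
        betaBinomial (t + 1) (k - t) (n - k) i * ((t + 1 + i : ℕ) * harm (t + 1 + i))
      = (t + 1) * (n + 1) / (k + 1) * (harm (t + 1) + harm (n + 1) - harm (k + 1)) := by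
  rw [sum_range_mul_harm (by omega), show t + 1 + (k - t) + (n - k) = n + 1 by omega,
    show t + 1 + (k - t) = k + 1 by omega]
  push_cast [Nat.cast_sub htk, Nat.cast_sub hkn]
  ring_nf

end betaBinomial

lemma piw_natCast {t k : ℕ} (htk : t ≤ k) (N i : ℕ) :
    piw t k N i = betaBinomial (t + 1) (k - t) N i := by
  unfold piw
  split_ifs with h
  · simp [betaBinomial, ascNat_eq_ascFactorial, show t + 1 + (k - t) = k + 1 by omega]
  · exact (betaBinomial.eq_zero_of_lt (by omega)).symm

lemma sum_range_piw_mul {t k N n : ℕ} (htk : t ≤ k) (hn : t + N + 2 ≤ n) (φ : ℕ → ℝ) :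
    ∑ j ∈ range (n - 1), piw t k N ((j : ℤ) - t) * φ j
      = ∑ i ∈ range (N + 1), betaBinomial (t + 1) (k - t) N i * φ (t + i) := by
  have hsupp : ∀ j ∈ range (n - 1), j ∉ Ico t (t + (N + 1)) →
      piw t k N ((j : ℤ) - t) * φ j = 0 := by
    intro j _ hj
    rw [Finset.mem_Ico] at hj
    rw [piw, if_neg (by omega), zero_mul]
  have hsub : Ico t (t + (N + 1)) ⊆ range (n - 1) := fun j hj => by
    simp only [Finset.mem_Ico, Finset.mem_range] at hj ⊢
    omega
  rw [← Finset.sum_subset hsub hsupp, Finset.sum_Ico_eq_sum_range, Nat.add_sub_cancel_left]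
  refine Finset.sum_congr rfl fun i _ => ?_
  rw [← piw_natCast htk, Nat.cast_add, add_sub_cancel_left]

lemma sum_wgt_mul {t1 t2 t3 k n : ℕ} (hk : k = t1 + t2 + t3 + 2) (hkn : k ≤ n) (ψ : ℕ → ℝ) :
    ∑ j ∈ range (n - 1), wgt t1 t2 t3 n j * ψ (j + 1)
      = ∑ i ∈ range (n - k + 1), betaBinomial (t1 + 1) (k - t1) (n - k) i * ψ (t1 + 1 + i)
        + ∑ i ∈ range (n - k + 1), betaBinomial (t2 + 1) (k - t2) (n - k) i * ψ (t2 + 1 + i)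
        + ∑ i ∈ range (n - k + 1), betaBinomial (t3 + 1) (k - t3) (n - k) i * ψ (t3 + 1 + i) := by
  subst hk
  simp only [Nat.add_right_comm _ 1]
  rw [← sum_range_piw_mul (n := n) (φ := fun j => ψ (j + 1)) (by omega) (by omega),
    ← sum_range_piw_mul (n := n) (φ := fun j => ψ (j + 1)) (by omega) (by omega),
    ← sum_range_piw_mul (n := n) (φ := fun j => ψ (j + 1)) (by omega) (by omega),
    ← Finset.sum_add_distrib, ← Finset.sum_add_distrib]
  refine Finset.sum_congr rfl fun j _ => ?_
  rw [wgt]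
  ring

lemma piw_nonneg (t k N : ℕ) (i : ℤ) : 0 ≤ piw t k N i := by
  unfold piw
  split_ifs <;> positivity

lemma wgt_nonneg (t1 t2 t3 n j : ℕ) : 0 ≤ wgt t1 t2 t3 n j :=
  add_nonneg (add_nonneg (piw_nonneg ..) (piw_nonneg ..)) (piw_nonneg ..)

lemma sum_wgt {t1 t2 t3 n : ℕ} (hn : t1 + t2 + t3 + 2 ≤ n) :
    ∑ j ∈ range (n - 1), wgt t1 t2 t3 n j = 3 := by
  have h := sum_wgt_mul rfl hn fun _ => 1
  simp only [mul_one] at h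
  rw [h, betaBinomial.sum_range (by omega), betaBinomial.sum_range (by omega),
    betaBinomial.sum_range (by omega)]
  norm_num

lemma sum_wgt_mul_succ {t1 t2 t3 n : ℕ} (hn : t1 + t2 + t3 + 2 ≤ n) :
    ∑ j ∈ range (n - 1), wgt t1 t2 t3 n j * ((j : ℝ) + 1) = n + 1 := by
  have h := sum_wgt_mul rfl hn fun m => (m : ℝ)
  rw [betaBinomial.sum_range_mul_natCast_of_le (by omega) hn,
    betaBinomial.sum_range_mul_natCast_of_le (by omega) hn,
    betaBinomial.sum_range_mul_natCast_of_le (by omega) hn] at h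
  push_cast at h
  rw [h]
  field_simp
  ring

lemma sum_wgt_mul_succ_mul_harm {t1 t2 t3 n : ℕ} (hn : t1 + t2 + t3 + 2 ≤ n) :
    ∑ j ∈ range (n - 1), wgt t1 t2 t3 n j * (((j : ℝ) + 1) * harm (j + 1))
      = (n + 1) * harm (n + 1) - (n + 1) * Hdisc t1 t2 t3 := by
  have h := sum_wgt_mul rfl hn fun m => (m : ℝ) * harm m
  rw [betaBinomial.sum_range_mul_harm_of_le (by omega) hn,
    betaBinomial.sum_range_mul_harm_of_le (by omega) hn,
    betaBinomial.sum_range_mul_harm_of_le (by omega) hn] at h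
  push_cast at h
  rw [h, Hdisc, show t1 + t2 + t3 + 3 = t1 + t2 + t3 + 2 + 1 by rfl]
  field_simp
  ring

lemma isEquivalent_harm_succ_log : (fun n : ℕ => harm (n + 1)) ~[atTop] fun n => Real.log n := by
  have hlim : Tendsto (fun n : ℕ => harm (n + 1) - Real.log n) atTop
      (𝓝 (eulerMascheroniConstant + 0)) :=
    (tendsto_harmonic_sub_log.add tendsto_one_div_add_atTop_nhds_zero_nat).congr fun n => by
      rw [harm_succ, harm_eq_harmonic]
      ring
  exact (hlim.isBigO_one ℝ).trans_isLittleO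
    (isLittleO_const_log_atTop.comp_tendsto tendsto_natCast_atTop_atTop)

lemma isEquivalent_natCast_add_one : (fun n : ℕ => (n : ℝ) + 1) ~[atTop] fun n => (n : ℝ) :=
  IsEquivalent.refl.add_isLittleO <| (isLittleO_one_left_iff ℝ).2 <|
    tendsto_norm_atTop_atTop.comp tendsto_natCast_atTop_atTop

lemma isLittleO_natCast_mul_log : (fun n : ℕ => (n : ℝ)) =o[atTop] fun n => n * Real.log n := by
  simpa using (isBigO_refl (fun n : ℕ => (n : ℝ)) atTop).mul_isLittleO
    (isLittleO_const_log_atTop (c := 1).comp_tendsto tendsto_natCast_atTop_atTop)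

lemma tendsto_div_mul_log_of_isBigO {f : ℕ → ℝ} {α : ℝ}
    (hf : (fun n => f n - α * ((n + 1) * harm (n + 1))) =O[atTop] fun n => (n : ℝ) + 1) :
    Tendsto (fun n : ℕ => f n / (n * Real.log n)) atTop (𝓝 α) := by
  have hmain : Tendsto (fun n : ℕ => (n + 1) * harm (n + 1) / (n * Real.log n)) atTop (𝓝 1) := by
    refine (isEquivalent_iff_tendsto_one ?_).1
      (isEquivalent_natCast_add_one.mul isEquivalent_harm_succ_log)
    filter_upwards [eventually_gt_atTop 1] with n hn
    have : (1 : ℝ) < n := by exact_mod_cast hn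
    exact mul_ne_zero (by positivity) (Real.log_pos this).ne'
  have hrest := (hf.trans_isLittleO
    (isEquivalent_natCast_add_one.trans_isLittleO isLittleO_natCast_mul_log)).tendsto_div_nhds_zero
  simpa using ((hmain.const_mul α).add hrest).congr fun n => by ring

section LinearRecurrence

variable (ω : ℕ → ℕ → ℝ) (w : ℕ)

lemma exists_abs_le_mul_succ_of_eq_sum (hω : ∀ n j, 0 ≤ ω n j)
    (h1 : ∀ n, w < n → ∑ j ∈ range (n - 1), ω n j * ((j : ℝ) + 1) ≤ n + 1)
    {D : ℕ → ℝ} (hD : ∀ n, w < n → D n = ∑ j ∈ range (n - 1), ω n j * D j) :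
    ∃ c, ∀ n, |D n| ≤ c * (n + 1) := by
  set c := ∑ j ∈ range (w + 1), |D j|
  have hc : 0 ≤ c := Finset.sum_nonneg fun j _ => abs_nonneg _
  refine ⟨c, fun n => ?_⟩
  induction n using Nat.strong_induction_on with
  | _ n ih =>
    rcases le_or_gt n w with hn | hn
    · calc |D n| ≤ c := Finset.single_le_sum (f := fun j => |D j|) (fun j _ => abs_nonneg _)
            (Finset.mem_range.2 (Nat.lt_succ_of_le hn))
        _ ≤ c * (n + 1) := le_mul_of_one_le_right hc (by linarith [(n.cast_nonneg : (0 : ℝ) ≤ n)])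
    · calc |D n| ≤ ∑ j ∈ range (n - 1), ω n j * |D j| := by
            rw [hD n hn]
            refine (Finset.abs_sum_le_sum_abs _ _).trans_eq (Finset.sum_congr rfl fun j _ => ?_)
            rw [abs_mul, abs_of_nonneg (hω n j)]
        _ ≤ ∑ j ∈ range (n - 1), ω n j * (c * (j + 1)) :=
            Finset.sum_le_sum fun j hj => mul_le_mul_of_nonneg_left
              (ih j (by rw [Finset.mem_range] at hj; omega)) (hω n j)
        _ = c * ∑ j ∈ range (n - 1), ω n j * (j + 1) := by
            rw [Finset.mul_sum]
            exact Finset.sum_congr rfl fun j _ => by ring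
        _ ≤ c * (n + 1) := mul_le_mul_of_nonneg_left (h1 n hn) hc

theorem tendsto_div_mul_log_of_eq_add_sum (s H a β : ℝ) (hs : s ≠ 1) (hH : H ≠ 0)
    (hω : ∀ n j, 0 ≤ ω n j)
    (h0 : ∀ n, w < n → ∑ j ∈ range (n - 1), ω n j = s)
    (h1 : ∀ n, w < n → ∑ j ∈ range (n - 1), ω n j * ((j : ℝ) + 1) = n + 1)
    (h2 : ∀ n, w < n → ∑ j ∈ range (n - 1), ω n j * (((j : ℝ) + 1) * harm (j + 1))
      = (n + 1) * harm (n + 1) - (n + 1) * H)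
    {C : ℕ → ℝ} (hC : ∀ n, w < n → C n = a * (n + 1) + β + ∑ j ∈ range (n - 1), ω n j * C j) :
    Tendsto (fun n : ℕ => C n / (n * Real.log n)) atTop (𝓝 (a / H)) := by
  set α := a / H
  set γ := β / (1 - s)
  -- `α` matches the linear part of the toll through `h2`, `γ` its constant part through `h0`.
  set P : ℕ → ℝ := fun n => α * ((n + 1) * harm (n + 1)) + γ
  have hP : ∀ n, w < n → P n = a * (n + 1) + β + ∑ j ∈ range (n - 1), ω n j * P j := by
    intro n hn
    have h1s : 1 - s ≠ 0 := sub_ne_zero.2 hs.symm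
    simp only [P, α, γ, mul_add, Finset.sum_add_distrib, mul_left_comm _ α, ← Finset.mul_sum,
      ← Finset.sum_mul, h0 n hn, h2 n hn]
    field_simp
    ring
  obtain ⟨c, hc⟩ := exists_abs_le_mul_succ_of_eq_sum ω w hω (fun n hn => (h1 n hn).le)
    (D := fun n => C n - P n) fun n hn => by
      simp only [hC n hn, hP n hn, mul_sub, Finset.sum_sub_distrib]
      ring
  refine tendsto_div_mul_log_of_isBigO <|
    IsBigO.of_bound (c + |γ|) (Eventually.of_forall fun n => ?_)
  have hn : (0 : ℝ) ≤ n + 1 := by positivity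
  rw [Real.norm_eq_abs, Real.norm_of_nonneg hn,
    show C n - α * ((n + 1) * harm (n + 1)) = (C n - P n) + γ by simp only [P]; ring]
  calc |C n - P n + γ| ≤ |C n - P n| + |γ| := abs_add_le _ _
    _ ≤ c * (n + 1) + |γ| * (n + 1) := add_le_add (hc n) (le_mul_of_one_le_right (abs_nonneg γ)
        (by linarith [(n.cast_nonneg : (0 : ℝ) ≤ n)]))
    _ = (c + |γ|) * (n + 1) := by ring

end LinearRecurrence

/-- The comparison-count recurrence of Generalized Yaroslavskiy Quicksort:
its solution satisfies `C_n / (n ln n) → a_C / H(t)`. -/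
theorem stmt1 (t1 t2 t3 w k : ℕ) (hk : k = t1 + t2 + t3 + 2) (hw : k ≤ w)
    (C : ℕ → ℝ)
    (hrec : ∀ n : ℕ, w < n →
      C n = ((n : ℝ) - k) * (1 + ((t2 : ℝ) + 1) / ((k : ℝ) + 1))
          + (2 * (t1 : ℝ) + t2 + 3) * ((t3 : ℝ) + 1) / (((k : ℝ) + 1) * ((k : ℝ) + 2))
              * ((n : ℝ) - k - 1)
          + 3 * ((t3 : ℝ) + 1) / ((k : ℝ) + 1)
          + ∑ j ∈ Finset.range (n - 1), wgt t1 t2 t3 n j * C j) :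
    Tendsto (fun n : ℕ => C n / ((n : ℝ) * Real.log n)) atTop
      (nhds ((1 + ((t2 : ℝ) + 1) / ((k : ℝ) + 1)
              + (2 * (t1 : ℝ) + t2 + 3) * ((t3 : ℝ) + 1) / (((k : ℝ) + 1) * ((k : ℝ) + 2)))
            / Hdisc t1 t2 t3)) := by
  have hn : ∀ n, w < n → t1 + t2 + t3 + 2 ≤ n := fun n hn => by omega
  refine tendsto_div_mul_log_of_eq_add_sum (wgt t1 t2 t3) w 3 _ _
    (3 * ((t3 : ℝ) + 1) / ((k : ℝ) + 1) - (1 + ((t2 : ℝ) + 1) / ((k : ℝ) + 1)) * (k + 1)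
      - (2 * (t1 : ℝ) + t2 + 3) * ((t3 : ℝ) + 1) / (((k : ℝ) + 1) * ((k : ℝ) + 2)) * (k + 2))
    (by norm_num) (Hdisc_pos t1 t2 t3).ne' (wgt_nonneg t1 t2 t3) (fun n h => sum_wgt (hn n h))
    (fun n h => sum_wgt_mul_succ (hn n h)) (fun n h => sum_wgt_mul_succ_mul_harm (hn n h))
    fun n h => ?_
  rw [hrec n h]
  ring
end

section
/- Let t = (t₁,t₂,t₃) ∈ ℕ³, k = t₁+t₂+t₃+2, n ≥ k+1 and N = n−k. The compound Dirichlet–multinomial expectation of (I₁+I₂)·I₃ satisfies E[(I₁+I₂)·I₃]/N = ((t₁+t₂+2)(t₃+1)/((k+1)(k+2)))·(N−1); equivalently, the expected value of a hypergeometric variable Hyp(I₁+I₂, I₃, N), averaged over the compound distribution of I, equals ((t₁+t₂+2)(t₃+1)/((k+1)(k+2)))·(n−k−1). -/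
open Finset MeasureTheory

/-- The triangle `T = {(d₁,d₂) : d₁ ≥ 0, d₂ ≥ 0, d₁+d₂ ≤ 1} ⊂ ℝ²`. -/
def simplex2 : Set (ℝ × ℝ) := {p | 0 ≤ p.1 ∧ 0 ≤ p.2 ∧ p.1 + p.2 ≤ 1}

/-- The `Dirichlet(t₁+1, t₂+1, t₃+1)` density
`d₁^{t₁} d₂^{t₂} (1−d₁−d₂)^{t₃} / B` with `B = t₁!t₂!t₃!/k!`, `k = t₁+t₂+t₃+2`. -/
noncomputable def dirDens (t1 t2 t3 : ℕ) (p : ℝ × ℝ) : ℝ :=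
  p.1 ^ t1 * p.2 ^ t2 * (1 - p.1 - p.2) ^ t3 /
    ((t1.factorial * t2.factorial * t3.factorial : ℝ) / ((t1 + t2 + t3 + 2).factorial : ℝ))

/-- The `Multinomial(N, (d₁, d₂, 1−d₁−d₂))` expectation of `g(I₁,I₂,I₃)`:
`∑_{i₁+i₂+i₃=N} (N!/(i₁!i₂!i₃!)) d₁^{i₁} d₂^{i₂} (1−d₁−d₂)^{i₃} g(i₁,i₂,i₃)`. -/
noncomputable def multinomExp (N : ℕ) (p : ℝ × ℝ) (g : ℕ → ℕ → ℕ → ℝ) : ℝ :=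
  ∑ i1 ∈ Finset.range (N + 1), ∑ i2 ∈ Finset.range (N + 1 - i1),
    (N.factorial : ℝ) / ((i1.factorial : ℝ) * (i2.factorial : ℝ) * ((N - i1 - i2).factorial : ℝ))
      * p.1 ^ i1 * p.2 ^ i2 * (1 - p.1 - p.2) ^ (N - i1 - i2) * g i1 i2 (N - i1 - i2)

/-- The compound Dirichlet–multinomial expectation `E[g(I)]`. -/
noncomputable def compoundExp (t1 t2 t3 N : ℕ) (g : ℕ → ℕ → ℕ → ℝ) : ℝ :=
  ∫ p in simplex2, dirDens t1 t2 t3 p * multinomExp N p g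

lemma fact_prod (a m : ℕ) : (a.factorial * ∏ j ∈ Finset.range m, (a + 1 + j) : ℕ) = (a + m).factorial := by
  induction m with
  | zero => simp
  | succ m ih =>
    rw [Finset.prod_range_succ, ← mul_assoc, ih]
    rw [show a + (m+1) = (a + m) + 1 by ring, Nat.factorial_succ]
    ring

lemma beta_nat (a b : ℕ) : (∫ x in (0:ℝ)..1, x ^ a * (1 - x) ^ b)
    = (a.factorial * b.factorial : ℝ) / ((a + b + 1).factorial : ℝ) := by
  have ha : (0:ℝ) < ((a:ℂ) + 1).re := by simp; positivity
  have h := Complex.betaIntegral_eval_nat_add_one_right ha b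
  rw [Complex.betaIntegral] at h
  have h2 : ∀ x : ℝ, (x:ℂ) ^ ((a:ℂ) + 1 - 1) * (1 - (x:ℂ)) ^ ((b:ℂ) + 1 - 1)
      = ((x ^ a * (1 - x) ^ b : ℝ) : ℂ) := by
    intro x
    rw [add_sub_cancel_right, add_sub_cancel_right, Complex.cpow_natCast, Complex.cpow_natCast]
    push_cast
    ring
  simp_rw [h2, intervalIntegral.integral_ofReal] at h
  have hfa : ((a.factorial : ℂ)) ≠ 0 := by exact_mod_cast Nat.factorial_ne_zero a
  have hfab : (((a+b+1).factorial : ℂ)) ≠ 0 := by exact_mod_cast Nat.factorial_ne_zero _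
  have hc : ((a.factorial : ℂ) * ∏ j ∈ Finset.range (b+1), ((a:ℂ) + 1 + (j:ℂ)))
      = (((a + b + 1).factorial) : ℂ) := by
    rw [show a + b + 1 = a + (b+1) by ring, ← fact_prod a (b + 1)]
    push_cast
    ring
  have hprod : (∏ j ∈ Finset.range (b + 1), ((a:ℂ) + 1 + (j:ℂ)))
      = (((a + b + 1).factorial : ℕ) : ℂ) / ((a.factorial : ℂ)) := by
    rw [eq_div_iff hfa]
    linear_combination hc
  rw [hprod] at h
  have hres : ((∫ x in (0:ℝ)..1, x ^ a * (1 - x) ^ b : ℝ) : ℂ)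
      = ((a.factorial * b.factorial : ℝ) / ((a + b + 1).factorial : ℝ) : ℂ) := by
    rw [h]
    push_cast
    rw [div_div_eq_mul_div]
    ring
  exact_mod_cast hres

lemma beta_scaled (b c : ℕ) (s : ℝ) :
    (∫ y in (0:ℝ)..s, y ^ b * (s - y) ^ c)
      = s ^ (b + c + 1) * ((b.factorial * c.factorial : ℝ) / ((b + c + 1).factorial : ℝ)) := by
  rcases eq_or_ne s 0 with rfl | hs
  · simp
  · have h := intervalIntegral.integral_comp_mul_left (a := (0:ℝ)) (b := 1)
      (fun y => y ^ b * (s - y) ^ c) hs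
    rw [mul_zero, mul_one] at h
    have h2 : (∫ x in (0:ℝ)..1, (s * x) ^ b * (s - s * x) ^ c)
        = s ^ (b + c) * ∫ x in (0:ℝ)..1, x ^ b * (1 - x) ^ c := by
      rw [← intervalIntegral.integral_const_mul]
      congr 1
      ext x
      rw [show s - s * x = s * (1 - x) by ring]
      rw [mul_pow, mul_pow]
      ring
    rw [h2, beta_nat] at h
    have := congrArg (fun z => s * z) h
    simp only [smul_eq_mul, ← mul_assoc, mul_inv_cancel₀ hs, one_mul] at this
    rw [← this]
    ring

lemma simplex2_isClosed : IsClosed simplex2 := by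
  have h1 : IsClosed {p : ℝ × ℝ | 0 ≤ p.1} := isClosed_le continuous_const continuous_fst
  have h2 : IsClosed {p : ℝ × ℝ | 0 ≤ p.2} := isClosed_le continuous_const continuous_snd
  have h3 : IsClosed {p : ℝ × ℝ | p.1 + p.2 ≤ 1} :=
    isClosed_le (continuous_fst.add continuous_snd) continuous_const
  exact (h1.inter (h2.inter h3) : _)

lemma simplex2_isCompact : IsCompact simplex2 := by
  apply IsCompact.of_isClosed_subset (isCompact_Icc (a := ((0:ℝ),(0:ℝ))) (b := (1,1)))
    simplex2_isClosed
  rintro ⟨x, y⟩ ⟨h1, h2, h3⟩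
  simp only [Set.mem_Icc, Prod.mk_le_mk]
  exact ⟨⟨h1, h2⟩, ⟨by linarith, by linarith⟩⟩

lemma triangle_integral (a b c : ℕ) :
    (∫ p in simplex2, p.1 ^ a * p.2 ^ b * (1 - p.1 - p.2) ^ c)
      = (a.factorial * b.factorial * c.factorial : ℝ) / ((a + b + c + 2).factorial : ℝ) := by
  classical
  set f : ℝ × ℝ → ℝ := fun p => p.1 ^ a * p.2 ^ b * (1 - p.1 - p.2) ^ c with hf
  have hcont : Continuous f := by fun_prop
  have hmeas : MeasurableSet simplex2 := simplex2_isClosed.measurableSet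
  have hInt : IntegrableOn f simplex2 := hcont.continuousOn.integrableOn_compact simplex2_isCompact
  have hIndInt : Integrable (simplex2.indicator f) := (integrable_indicator_iff hmeas).mpr hInt
  have step1 : (∫ p in simplex2, f p) = ∫ p, simplex2.indicator f p := (integral_indicator hmeas).symm
  set K : ℝ := (b.factorial * c.factorial : ℝ) / ((b + c + 1).factorial : ℝ) with hK
  have step2 : (∫ p, simplex2.indicator f p)
      = ∫ x : ℝ, ∫ y : ℝ, simplex2.indicator f (x, y) := by
    rw [MeasureTheory.Measure.volume_eq_prod]
    rw [MeasureTheory.Measure.volume_eq_prod] at hIndInt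
    exact MeasureTheory.integral_prod _ hIndInt
  have inner : ∀ x : ℝ, (∫ y : ℝ, simplex2.indicator f (x, y))
      = (Set.Icc (0:ℝ) 1).indicator (fun x => x ^ a * (1 - x) ^ (b + c + 1) * K) x := by
    intro x
    by_cases hx : x ∈ Set.Icc (0:ℝ) 1
    · obtain ⟨hx0, hx1⟩ := hx
      have hfun : (fun y => simplex2.indicator f (x, y))
          = (Set.Icc (0:ℝ) (1 - x)).indicator (fun y => f (x, y)) := by
        funext y
        rw [Set.indicator_apply, Set.indicator_apply]
        congr 1
        simp only [simplex2, Set.mem_setOf_eq, Set.mem_Icc, eq_iff_iff]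
        constructor
        · rintro ⟨_, h2, h3⟩; exact ⟨h2, by linarith⟩
        · rintro ⟨h2, h3⟩; exact ⟨hx0, h2, by linarith⟩
      rw [hfun, integral_indicator measurableSet_Icc,
        integral_Icc_eq_integral_Ioc, ← intervalIntegral.integral_of_le (by linarith)]
      have : (∫ y in (0:ℝ)..(1-x), f (x, y))
          = x ^ a * ∫ y in (0:ℝ)..(1-x), y ^ b * ((1 - x) - y) ^ c := by
        rw [← intervalIntegral.integral_const_mul]
        congr 1
        funext y
        simp only [hf]
        ring_nf
      rw [this, beta_scaled, Set.indicator_of_mem (Set.mem_Icc.mpr ⟨hx0, hx1⟩)]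
      ring
    · have hfun : (fun y => simplex2.indicator f (x, y)) = fun _ => (0:ℝ) := by
        have hx' : x < 0 ∨ 1 < x := by
          rcases lt_or_ge x 0 with h | h
          · exact Or.inl h
          · rcases le_or_gt x 1 with h' | h'
            · exact absurd (Set.mem_Icc.mpr ⟨h, h'⟩) hx
            · exact Or.inr h'
        funext y
        apply Set.indicator_of_notMem
        simp only [simplex2, Set.mem_setOf_eq]
        rintro ⟨h1, h2, h3⟩
        rcases hx' with h | h <;> linarith
      rw [hfun, integral_zero, Set.indicator_of_notMem hx]
  rw [step1, step2]
  simp_rw [inner]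
  rw [integral_indicator measurableSet_Icc, integral_Icc_eq_integral_Ioc,
    ← intervalIntegral.integral_of_le (by norm_num : (0:ℝ) ≤ 1)]
  have : (∫ x in (0:ℝ)..1, x ^ a * (1 - x) ^ (b + c + 1) * K)
      = (∫ x in (0:ℝ)..1, x ^ a * (1 - x) ^ (b + c + 1)) * K := by
    rw [← intervalIntegral.integral_mul_const]
  rw [this, beta_nat, hK]
  have h1 : ((a + (b + c + 1) + 1).factorial : ℝ) = ((a + b + c + 2).factorial : ℝ) := by
    norm_num; ring_nf
  rw [h1]
  have hbc : ((b + c + 1).factorial : ℝ) ≠ 0 := by exact_mod_cast Nat.factorial_ne_zero _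
  have habc : ((a + b + c + 2).factorial : ℝ) ≠ 0 := by exact_mod_cast Nat.factorial_ne_zero _
  field_simp

lemma sum_tri (N : ℕ) (F : ℕ → ℕ → ℝ) :
    ∑ i1 ∈ Finset.range (N+1), ∑ i2 ∈ Finset.range (N+1-i1), F i1 i2
    = ∑ s ∈ Finset.range (N+1), ∑ j ∈ Finset.range (s+1), F j (s - j) := by
  rw [Finset.sum_sigma', Finset.sum_sigma']
  refine Finset.sum_nbij' (fun q => ⟨q.1 + q.2, q.1⟩) (fun q => ⟨q.2, q.1 - q.2⟩)
    ?_ ?_ ?_ ?_ ?_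
  · rintro ⟨i1, i2⟩ hq
    simp only [Finset.mem_sigma, Finset.mem_range] at hq ⊢
    omega
  · rintro ⟨s, j⟩ hq
    simp only [Finset.mem_sigma, Finset.mem_range] at hq ⊢
    omega
  · rintro ⟨i1, i2⟩ hq
    simp only [Finset.mem_sigma, Finset.mem_range] at hq
    show (⟨i1, (i1 + i2) - i1⟩ : (_ : ℕ) × ℕ) = ⟨i1, i2⟩
    have h : (i1 + i2) - i1 = i2 := by omega
    rw [h]
  · rintro ⟨s, j⟩ hq
    simp only [Finset.mem_sigma, Finset.mem_range] at hq
    show (⟨j + (s - j), j⟩ : (_ : ℕ) × ℕ) = ⟨s, j⟩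
    have h : j + (s - j) = s := by omega
    rw [h]
  · rintro ⟨i1, i2⟩ hq
    simp only [Finset.mem_sigma, Finset.mem_range] at hq
    simp only [Nat.add_sub_cancel_left]

lemma fact_ne (m : ℕ) : ((m.factorial : ℝ)) ≠ 0 := by exact_mod_cast Nat.factorial_ne_zero m

lemma binom_moment (N : ℕ) (w z : ℝ) (hwz : w + z = 1) :
    ∑ s ∈ Finset.range (N+1),
      (N.factorial : ℝ) / ((s.factorial : ℝ) * (((N-s).factorial : ℝ)))
        * w ^ s * z ^ (N-s) * ((s : ℝ) * (((N - s : ℕ)) : ℝ))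
    = (N : ℝ) * ((N : ℝ) - 1) * w * z := by
  match N with
  | 0 => simp
  | 1 =>
    rw [Finset.sum_range_succ, Finset.sum_range_succ]
    norm_num
  | (m+2) =>
    rw [Finset.sum_range_succ', Finset.sum_range_succ]
    have hlast : ((m+2) - (m+2) : ℕ) = 0 := by omega
    have hterm : ∀ j ∈ Finset.range (m+1),
        ((m+2).factorial : ℝ) / (((j+1).factorial : ℝ) * ((((m+2)-(j+1)).factorial : ℝ)))
          * w ^ (j+1) * z ^ ((m+2)-(j+1)) * ((((j+1):ℕ) : ℝ) * ((((m+2) - (j+1) : ℕ)) : ℝ))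
        = ((m:ℝ)+2) * ((m:ℝ)+1) * w * z * (w ^ j * z ^ (m-j) * (m.choose j : ℝ)) := by
      intro j hj
      rw [Finset.mem_range] at hj
      have hjm : j ≤ m := by omega
      have hsub : (m+2) - (j+1) = (m-j) + 1 := by omega
      rw [hsub]
      rw [Nat.cast_choose ℝ hjm]
      have e1 : (((j+1).factorial : ℝ)) = ((j:ℝ)+1) * (j.factorial : ℝ) := by
        rw [Nat.factorial_succ]; push_cast; ring
      have e2 : ((((m-j)+1).factorial : ℝ)) = (((m-j : ℕ):ℝ)+1) * ((m-j).factorial : ℝ) := by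
        rw [Nat.factorial_succ]
        push_cast [Nat.cast_sub hjm]
        ring
      have e3 : (((m+2).factorial : ℝ)) = ((m:ℝ)+2) * ((m:ℝ)+1) * (m.factorial : ℝ) := by
        rw [show m + 2 = (m+1)+1 from rfl, Nat.factorial_succ, Nat.factorial_succ]
        push_cast; ring
      have e4 : ((((j+1):ℕ)) : ℝ) = (j:ℝ) + 1 := by push_cast; ring
      have e5 : ((((m-j)+1 : ℕ)) : ℝ) = ((m-j : ℕ):ℝ) + 1 := by push_cast [Nat.cast_sub hjm]; ring
      have hpow : z ^ ((m-j) + 1) = z ^ (m-j) * z := by rw [pow_succ]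
      have hpoww : w ^ (j + 1) = w ^ j * w := by rw [pow_succ]
      rw [e1, e2, e3, e4, e5, hpow, hpoww]
      set c : ℝ := ((m - j : ℕ) : ℝ) with hc
      have h4 : ((j:ℝ)+1) ≠ 0 := by positivity
      have h5 : (c+1) ≠ 0 := by
        have : (0:ℝ) ≤ c := by rw [hc]; positivity
        linarith
      have hj0 := fact_ne j
      have hmj0 := fact_ne (m - j)
      field_simp
    rw [Finset.sum_congr rfl hterm]
    rw [← Finset.mul_sum]
    have hbin : ∑ j ∈ Finset.range (m+1), (w ^ j * z ^ (m-j) * (m.choose j : ℝ))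
        = (w + z) ^ m := by
      rw [add_pow]
    rw [hbin, hwz, one_pow, hlast]
    push_cast
    ring

lemma multinom_closed (N : ℕ) (x y : ℝ) :
    (∑ i1 ∈ Finset.range (N + 1), ∑ i2 ∈ Finset.range (N + 1 - i1),
      (N.factorial : ℝ) / ((i1.factorial : ℝ) * (i2.factorial : ℝ) * ((N - i1 - i2).factorial : ℝ))
        * x ^ i1 * y ^ i2 * (1 - x - y) ^ (N - i1 - i2)
        * (((i1:ℝ) + (i2:ℝ)) * ((N - i1 - i2 : ℕ) : ℝ)))
    = (N:ℝ) * ((N:ℝ) - 1) * (x + y) * (1 - x - y) := by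
  rw [sum_tri]
  have hout : ∀ s ∈ Finset.range (N+1),
      (∑ j ∈ Finset.range (s+1),
        (N.factorial : ℝ) / ((j.factorial : ℝ) * (((s-j).factorial : ℝ)) * ((N - j - (s-j)).factorial : ℝ))
          * x ^ j * y ^ (s-j) * (1 - x - y) ^ (N - j - (s-j))
          * (((j:ℝ) + ((s-j : ℕ):ℝ)) * ((N - j - (s-j) : ℕ) : ℝ)))
      = (N.factorial : ℝ) / ((s.factorial : ℝ) * (((N-s).factorial : ℝ)))
          * (x+y) ^ s * (1-x-y) ^ (N-s) * ((s:ℝ) * ((N - s : ℕ):ℝ)) := by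
    intro s hs
    rw [Finset.mem_range] at hs
    have hsN : s ≤ N := by omega
    have hterm : ∀ j ∈ Finset.range (s+1),
        (N.factorial : ℝ) / ((j.factorial : ℝ) * (((s-j).factorial : ℝ)) * ((N - j - (s-j)).factorial : ℝ))
          * x ^ j * y ^ (s-j) * (1 - x - y) ^ (N - j - (s-j))
          * (((j:ℝ) + ((s-j : ℕ):ℝ)) * ((N - j - (s-j) : ℕ) : ℝ))
        = (N.factorial : ℝ) / ((s.factorial : ℝ) * (((N-s).factorial : ℝ)))
            * (1-x-y) ^ (N-s) * ((s:ℝ) * ((N - s : ℕ):ℝ))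
            * (x ^ j * y ^ (s-j) * (s.choose j : ℝ)) := by
      intro j hj
      rw [Finset.mem_range] at hj
      have hjs : j ≤ s := by omega
      have hNs : N - j - (s - j) = N - s := by omega
      rw [hNs, Nat.cast_choose ℝ hjs]
      have e1 : ((s - j : ℕ):ℝ) = (s:ℝ) - (j:ℝ) := by
        rw [Nat.cast_sub hjs]
      rw [e1]
      have f1 := fact_ne j
      have f2 := fact_ne (s - j)
      have f3 := fact_ne s
      have f4 := fact_ne (N - s)
      field_simp
      ring
    rw [Finset.sum_congr rfl hterm, ← Finset.mul_sum, add_pow]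
    ring
  rw [Finset.sum_congr rfl hout]
  exact binom_moment N (x+y) (1-x-y) (by ring)


lemma compound_eval (t1 t2 t3 N : ℕ) :
    compoundExp t1 t2 t3 N (fun i1 i2 i3 => ((i1 : ℝ) + (i2 : ℝ)) * (i3 : ℝ))
    = (N:ℝ) * ((N:ℝ) - 1) * (((t1:ℝ) + (t2:ℝ) + 2) * ((t3:ℝ) + 1))
        / (((t1:ℝ) + t2 + t3 + 3) * ((t1:ℝ) + t2 + t3 + 4)) := by
  have hm : ∀ p : ℝ × ℝ, multinomExp N p (fun i1 i2 i3 => ((i1 : ℝ) + (i2 : ℝ)) * (i3 : ℝ))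
      = (N:ℝ) * ((N:ℝ) - 1) * (p.1 + p.2) * (1 - p.1 - p.2) := by
    intro p
    exact multinom_closed N p.1 p.2
  set C : ℝ := (N:ℝ) * ((N:ℝ) - 1) /
      ((t1.factorial * t2.factorial * t3.factorial : ℝ) / ((t1 + t2 + t3 + 2).factorial : ℝ)) with hC
  have hpt : ∀ p : ℝ × ℝ, dirDens t1 t2 t3 p *
      multinomExp N p (fun i1 i2 i3 => ((i1 : ℝ) + (i2 : ℝ)) * (i3 : ℝ))
      = C * (p.1 ^ (t1+1) * p.2 ^ t2 * (1 - p.1 - p.2) ^ (t3+1))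
        + C * (p.1 ^ t1 * p.2 ^ (t2+1) * (1 - p.1 - p.2) ^ (t3+1)) := by
    intro p
    rw [hm p, dirDens, hC]
    rw [pow_succ, pow_succ, pow_succ]
    ring
  have hInt1 : IntegrableOn (fun p : ℝ × ℝ => p.1 ^ (t1+1) * p.2 ^ t2 * (1 - p.1 - p.2) ^ (t3+1))
      simplex2 := by
    exact (by fun_prop : Continuous fun p : ℝ × ℝ =>
      p.1 ^ (t1+1) * p.2 ^ t2 * (1 - p.1 - p.2) ^ (t3+1)).continuousOn.integrableOn_compact
      simplex2_isCompact
  have hInt2 : IntegrableOn (fun p : ℝ × ℝ => p.1 ^ t1 * p.2 ^ (t2+1) * (1 - p.1 - p.2) ^ (t3+1))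
      simplex2 := by
    exact (by fun_prop : Continuous fun p : ℝ × ℝ =>
      p.1 ^ t1 * p.2 ^ (t2+1) * (1 - p.1 - p.2) ^ (t3+1)).continuousOn.integrableOn_compact
      simplex2_isCompact
  have step : compoundExp t1 t2 t3 N (fun i1 i2 i3 => ((i1 : ℝ) + (i2 : ℝ)) * (i3 : ℝ))
      = ∫ p in simplex2, (C * (p.1 ^ (t1+1) * p.2 ^ t2 * (1 - p.1 - p.2) ^ (t3+1))
        + C * (p.1 ^ t1 * p.2 ^ (t2+1) * (1 - p.1 - p.2) ^ (t3+1))) := by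
    rw [compoundExp]
    congr 1
    funext p
    exact hpt p
  rw [step, integral_add (hInt1.const_mul C) (hInt2.const_mul C),
    integral_const_mul, integral_const_mul]
  have e1 : (∫ p in simplex2, p.1 ^ (t1+1) * p.2 ^ t2 * (1 - p.1 - p.2) ^ (t3+1))
      = ((t1+1).factorial * t2.factorial * (t3+1).factorial : ℝ)
        / (((t1 + t2 + t3 + 2) + 2).factorial : ℝ) := by
    rw [triangle_integral (t1+1) t2 (t3+1),
      show t1 + 1 + t2 + (t3 + 1) + 2 = t1 + t2 + t3 + 2 + 2 from by omega]
  have e2 : (∫ p in simplex2, p.1 ^ t1 * p.2 ^ (t2+1) * (1 - p.1 - p.2) ^ (t3+1))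
      = (t1.factorial * (t2+1).factorial * (t3+1).factorial : ℝ)
        / (((t1 + t2 + t3 + 2) + 2).factorial : ℝ) := by
    rw [triangle_integral t1 (t2+1) (t3+1),
      show t1 + (t2 + 1) + (t3 + 1) + 2 = t1 + t2 + t3 + 2 + 2 from by omega]
  rw [e1, e2, hC]
  have f1 : (((t1+1).factorial : ℝ)) = ((t1:ℝ)+1) * t1.factorial := by
    rw [Nat.factorial_succ]; push_cast; ring
  have f2 : (((t2+1).factorial : ℝ)) = ((t2:ℝ)+1) * t2.factorial := by
    rw [Nat.factorial_succ]; push_cast; ring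
  have f3 : (((t3+1).factorial : ℝ)) = ((t3:ℝ)+1) * t3.factorial := by
    rw [Nat.factorial_succ]; push_cast; ring
  have f4 : ((((t1 + t2 + t3 + 2) + 2).factorial : ℝ))
      = ((t1:ℝ) + t2 + t3 + 4) * ((t1:ℝ) + t2 + t3 + 3) * ((t1 + t2 + t3 + 2).factorial : ℝ) := by
    rw [show (t1 + t2 + t3 + 2) + 2 = ((t1 + t2 + t3 + 2) + 1) + 1 from rfl,
      Nat.factorial_succ, Nat.factorial_succ]
    push_cast; ring
  rw [f1, f2, f3, f4]
  have g1 := fact_ne t1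
  have g2 := fact_ne t2
  have g3 := fact_ne t3
  have g4 := fact_ne (t1 + t2 + t3 + 2)
  have g5 : ((t1:ℝ) + t2 + t3 + 4) ≠ 0 := by positivity
  have g6 : ((t1:ℝ) + t2 + t3 + 3) ≠ 0 := by positivity
  field_simp
  ring

/-- `E[(I₁+I₂)·I₃]/N = ((t₁+t₂+2)(t₃+1)/((k+1)(k+2)))·(N−1)`, i.e. the averaged expectation of
a hypergeometric variable `Hyp(I₁+I₂, I₃, N)` equals `((t₁+t₂+2)(t₃+1)/((k+1)(k+2)))·(n−k−1)`. -/
theorem stmt5 (t1 t2 t3 n : ℕ) (hn : t1 + t2 + t3 + 3 ≤ n) :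
    compoundExp t1 t2 t3 (n - (t1 + t2 + t3 + 2))
        (fun i1 i2 i3 => ((i1 : ℝ) + (i2 : ℝ)) * (i3 : ℝ))
        / ((n - (t1 + t2 + t3 + 2) : ℕ) : ℝ)
    = ((t1 : ℝ) + t2 + 2) * ((t3 : ℝ) + 1)
        / (((t1 : ℝ) + t2 + t3 + 3) * ((t1 : ℝ) + t2 + t3 + 4))
        * (((n - (t1 + t2 + t3 + 2) : ℕ) : ℝ) - 1) := by
  have hk : t1 + t2 + t3 + 2 + 1 ≤ n := by omega
  set N : ℕ := n - (t1 + t2 + t3 + 2) with hN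
  have hN1 : 1 ≤ N := by omega
  have hNne : ((N:ℝ)) ≠ 0 := by
    have : (0:ℝ) < (N:ℝ) := by exact_mod_cast hN1
    linarith
  rw [compound_eval]
  field_simp
end
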